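/- Let D=(N,A,s,t) be an acyclic network and a an arc of A. The inequality x(a) ≥ 0 defines a facet of the flow polytope F(D) if and only if a belongs to at least one s–t path and, moreover, either D has exactly one s–t path, or the arc a is good (i.e., a lies on a corridor (u_1,u_2),...,(u_{m-1},u_m) with d̃⁺(u_1) ≥ 2 and d̃⁻(u_m) ≥ 2). -/

import Mathlib

open scoped Classical

variable {V : Type*} [Fintype V] [DecidableEq V]

/-- A directed graph (arc set `A`) is acyclic: no directed cycle. -/
def Acyclic (A : Finset (V × V)) : Prop :=
  ∀ v : V, ¬ Relation.TransGen (fun u w => (u, w) ∈ A) v v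

/-- Sum of `x` over the arcs of `A` with tail `v`. -/
noncomputable def outSum (A : Finset (V × V)) (x : V × V → ℝ) (v : V) : ℝ :=
  ∑ a ∈ A.filter (fun a => a.1 = v), x a

/-- Sum of `x` over the arcs of `A` with head `v`. -/
noncomputable def inSum (A : Finset (V × V)) (x : V × V → ℝ) (v : V) : ℝ :=
  ∑ a ∈ A.filter (fun a => a.2 = v), x a

/-- A flow of value 1 in the network `(V, A, s, t)`. -/
def IsFlow (A : Finset (V × V)) (s t : V) (x : V × V → ℝ) : Prop :=
  (∀ a, a ∉ A → x a = 0) ∧ (∀ a, 0 ≤ x a) ∧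
    (∀ v, v ≠ s → v ≠ t → outSum A x v = inSum A x v) ∧
    outSum A x s - inSum A x s = 1

/-- The flow polytope: all value-1 flows, as a subset of `ℝ^(V × V)`. -/
def flowPolytope (A : Finset (V × V)) (s t : V) : Set ((V × V) → ℝ) :=
  {x | IsFlow A s t x}

/-- An `s`–`t` path, given by its list of nodes. -/
def IsPath (A : Finset (V × V)) (s t : V) (p : List V) : Prop :=
  p.Chain' (fun u v => (u, v) ∈ A) ∧ p.head? = some s ∧ p.getLast? = some t ∧ p.Nodup

/-- The arcs of a path given by its node list. -/
def pathEdges (p : List V) : List (V × V) := p.zip p.tail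

/-- Characteristic vector of (the arc set of) a path. -/
def chi (p : List V) : (V × V) → ℝ := fun a => if a ∈ pathEdges p then 1 else 0

/-- Arcs lying on at least one `s`–`t` path (the arc set of the reduced network). -/
noncomputable def redArcs (A : Finset (V × V)) (s t : V) : Finset (V × V) :=
  A.filter fun a => ∃ p : List V, IsPath A s t p ∧ a ∈ pathEdges p

/-- Nodes incident to an arc of the reduced network. -/
noncomputable def redNodes (A : Finset (V × V)) (s t : V) : Finset V :=
  (redArcs A s t).image Prod.fst ∪ (redArcs A s t).image Prod.snd

/-- Out-degree in the reduced network. -/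
noncomputable def dplus (A : Finset (V × V)) (s t : V) (u : V) : ℕ :=
  ((redArcs A s t).filter fun a => a.1 = u).card

/-- In-degree in the reduced network. -/
noncomputable def dminus (A : Finset (V × V)) (s t : V) (u : V) : ℕ :=
  ((redArcs A s t).filter fun a => a.2 = u).card

/-- A corridor: a maximal path of the reduced network all of whose internal nodes
have in- and out-degree 1 in the reduced network. -/
def IsCorridor (A : Finset (V × V)) (s t : V) (c : List V) : Prop :=
  2 ≤ c.length ∧ c.Chain' (fun u v => (u, v) ∈ redArcs A s t) ∧
    (∀ v ∈ c.tail.dropLast, dminus A s t v = 1 ∧ dplus A s t v = 1) ∧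
    (∀ h, c.head? = some h → dminus A s t h ≠ 1 ∨ dplus A s t h ≠ 1) ∧
    (∀ z, c.getLast? = some z → dminus A s t z ≠ 1 ∨ dplus A s t z ≠ 1)

/-- A good corridor. -/
def IsGoodCorridor (A : Finset (V × V)) (s t : V) (c : List V) : Prop :=
  IsCorridor A s t c ∧ (∀ h, c.head? = some h → 2 ≤ dplus A s t h) ∧
    (∀ z, c.getLast? = some z → 2 ≤ dminus A s t z)

/-- A good arc: an arc belonging to some good corridor. -/
def IsGoodArc (A : Finset (V × V)) (s t : V) (a : V × V) : Prop :=
  ∃ c, IsGoodCorridor A s t c ∧ a ∈ pathEdges c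

/-- Two vertices of a polytope `S` are adjacent when the segment joining them is a
(one-dimensional) face of `S`, i.e. an exposed face. -/
def AdjacentVerts (S : Set ((V × V) → ℝ)) (x y : (V × V) → ℝ) : Prop :=
  x ≠ y ∧ IsExposed ℝ S (segment ℝ x y)

/-- A facet: a proper maximal (exposed) face. -/
def IsFacetOf (S F : Set ((V × V) → ℝ)) : Prop :=
  IsExposed ℝ S F ∧ F ≠ S ∧ ∀ G, IsExposed ℝ S G → G ≠ S → F ⊆ G → G = F

/-!
The flow polytope of an acyclic network is the convex hull of the characteristic vectors of its
`s`–`t` paths (flow decomposition). Hence every exposed face is the convex hull of the path vectors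
it contains, and `x(a) = 0` cuts out the face spanned by the paths avoiding `a`: the whole polytope
if no path uses `a`, and the empty set, a facet, if there is only one path.

A path meets a corridor in all of its arcs or in none. If the corridor through `a` is good, a path
through `a` can be recombined at the first node of the corridor with a path leaving it by another
arc, and at the last node with a path entering it by another arc. So a linear functional that is
maximal on every path avoiding `a` takes a single value on the paths through `a`, and an exposed
face containing the face of `a` is either that face or the whole polytope.

Conversely, if `b` is an arc such that every path through `b` uses `a`, then the face of `b`
contains the face of `a`, so at a facet every path through `a` uses `b` too. If the first node `u`
of the corridor through `a` has reduced out-degree 1, every path through `u` uses `a`; as `u` is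
not an internal node of a corridor, either `u = s` or two reduced arcs enter `u`, and both
contradict the above unless there is only one path. The last node is symmetric.
-/

/-- A point of `B` lies on a segment from `convexHull (X ∩ B)` to `convexHull (X \ B)`, and the
latter misses `B` because `convexHull X \ B` is convex. -/
theorem IsExtreme.subset_convexHull_inter {𝕜 E : Type*} [Field 𝕜] [LinearOrder 𝕜]
    [IsStrictOrderedRing 𝕜] [AddCommGroup E] [Module 𝕜 E] {X B : Set E}
    (h : IsExtreme 𝕜 (convexHull 𝕜 X) B) : B ⊆ convexHull 𝕜 (X ∩ B) := by
  intro x hx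
  have hZ : convexHull 𝕜 (X \ B) ⊆ convexHull 𝕜 X \ B :=
    convexHull_min (fun z hz => ⟨subset_convexHull 𝕜 X hz.1, hz.2⟩)
      (h.convex_sdiff (convex_convexHull 𝕜 X))
  rcases (X \ B).eq_empty_or_nonempty with hXB | hXB
  · rw [Set.inter_eq_left.2 (Set.sdiff_eq_empty.1 hXB)]
    exact h.subset hx
  rcases (X ∩ B).eq_empty_or_nonempty with hXB' | hXB'
  · rw [← Set.sdiff_self_inter, hXB', Set.sdiff_empty] at hZ
    exact absurd hx (hZ (h.subset hx)).2
  obtain ⟨y, hy, z, hz, hxyz⟩ := (mem_convexJoin (𝕜 := 𝕜)).1 <| by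
    rw [← convexHull_union hXB' hXB, Set.inter_union_sdiff]
    exact h.subset hx
  obtain rfl | hyx := eq_or_ne y x
  · exact hy
  have hzx : z ≠ x := fun hzx => (hZ hz).2 (hzx ▸ hx)
  exact absurd (h.left_mem_of_mem_openSegment (hZ hz).1
    (convexHull_mono Set.inter_subset_left hy) hx
    (mem_openSegment_of_ne_left_right hzx hyx (segment_symm 𝕜 y z ▸ hxyz))) (hZ hz).2

section PathEdges

variable {α : Type*} {p L R T L' T' : List α} {x y u v w w' : α} {e : α × α}

@[simp] lemma pathEdges_nil : pathEdges ([] : List α) = [] := rfl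

@[simp] lemma pathEdges_singleton (x : α) : pathEdges [x] = [] := rfl

@[simp] lemma pathEdges_cons_cons (x y : α) (l : List α) :
    pathEdges (x :: y :: l) = (x, y) :: pathEdges (y :: l) := rfl

lemma mem_pathEdges_iff : e ∈ pathEdges p ↔ ∃ L R, p = L ++ e.1 :: e.2 :: R := by
  induction p using List.twoStepInduction with
  | nil => simp
  | singleton x =>
    simp only [pathEdges_singleton, List.not_mem_nil, false_iff, not_exists]
    intro L R h
    have := congrArg List.length h
    simp at this
    omega
  | cons_cons x y l _ ih =>
    rw [pathEdges_cons_cons, List.mem_cons, ih y]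
    constructor
    · rintro (rfl | ⟨L, R, h⟩)
      · exact ⟨[], l, rfl⟩
      · exact ⟨x :: L, R, by simp [h]⟩
    · rintro ⟨_ | ⟨z, L⟩, R, h⟩
      · simp_all
      · simp only [List.cons_append, List.cons.injEq] at h
        exact Or.inr ⟨L, R, h.2⟩

lemma fst_mem_of_mem_pathEdges (h : e ∈ pathEdges p) : e.1 ∈ p := by
  obtain ⟨L, R, rfl⟩ := mem_pathEdges_iff.1 h
  simp

lemma snd_mem_of_mem_pathEdges (h : e ∈ pathEdges p) : e.2 ∈ p := by
  obtain ⟨L, R, rfl⟩ := mem_pathEdges_iff.1 h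
  simp

lemma pathEdges_append_cons (L T : List α) (v : α) :
    pathEdges (L ++ v :: T) = pathEdges (L ++ [v]) ++ pathEdges (v :: T) := by
  induction L using List.twoStepInduction with
  | nil => simp
  | singleton x => simp
  | cons_cons x y l _ ih =>
    have := ih y
    simp only [List.cons_append] at this ⊢
    simp [this]

lemma List.IsChain.rel_of_mem_pathEdges {r : α → α → Prop} (hp : p.IsChain r)
    (he : e ∈ pathEdges p) : r e.1 e.2 := by
  obtain ⟨L, R, rfl⟩ := mem_pathEdges_iff.1 he
  exact List.isChain_iff_forall_rel_of_append_cons_cons.1 hp rfl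

lemma nodup_pathEdges (hp : p.Nodup) : (pathEdges p).Nodup := by
  induction p using List.twoStepInduction with
  | nil => simp
  | singleton x => simp
  | cons_cons x y l _ ih =>
    rw [pathEdges_cons_cons, List.nodup_cons]
    exact ⟨fun h => (List.nodup_cons.1 hp).1 (fst_mem_of_mem_pathEdges h),
      ih y (List.nodup_cons.1 hp).2⟩

lemma List.Nodup.append_cons_inj (hp : (L ++ v :: T).Nodup) (h : L ++ v :: T = L' ++ v :: T') :
    L = L' ∧ T = T' := by
  have hlen : L.length = L'.length := by
    have hL : v ∉ L := fun hv => (List.nodup_append.1 hp).2.2 v hv v (by simp) rfl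
    have hL' : v ∉ L' := fun hv => (List.nodup_append.1 (h ▸ hp)).2.2 v hv v (by simp) rfl
    have := congrArg (List.idxOf v) h
    simpa [List.idxOf_append_of_notMem hL, List.idxOf_append_of_notMem hL'] using this
  obtain ⟨h₁, h₂⟩ := List.append_inj h hlen
  exact ⟨h₁, List.cons_injective h₂⟩

lemma List.Nodup.snd_eq_of_mem_pathEdges (hp : p.Nodup) (h : (v, w) ∈ pathEdges p)
    (h' : (v, w') ∈ pathEdges p) : w = w' := by
  obtain ⟨L, R, rfl⟩ := mem_pathEdges_iff.1 h
  obtain ⟨L', R', hp'⟩ := mem_pathEdges_iff.1 h'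
  exact (List.cons.inj (hp.append_cons_inj hp').2).1

lemma List.Nodup.fst_eq_of_mem_pathEdges (hp : p.Nodup) (h : (u, v) ∈ pathEdges p)
    (h' : (w, v) ∈ pathEdges p) : u = w := by
  obtain ⟨L, R, rfl⟩ := mem_pathEdges_iff.1 h
  obtain ⟨L', R', hp'⟩ := mem_pathEdges_iff.1 h'
  rw [show L ++ u :: v :: R = (L ++ [u]) ++ v :: R by simp] at hp hp'
  rw [show L' ++ w :: v :: R' = (L' ++ [w]) ++ v :: R' by simp] at hp'
  simpa using (List.append_inj' (hp.append_cons_inj hp').1 rfl).2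

lemma prefix_of_pathEdges_subset {x : α} :
    ∀ {l L T : List α}, (L ++ x :: T).Nodup →
      (∀ e ∈ pathEdges (x :: l), e ∈ pathEdges (L ++ x :: T)) → x :: l <+: x :: T
  | [], _, T, _, _ => ⟨T, rfl⟩
  | y :: l, L, T, hr, hc => by
    obtain ⟨L', T', hr'⟩ := mem_pathEdges_iff.1 (hc (x, y) (by simp))
    obtain rfl := (hr.append_cons_inj hr').2
    have ih := prefix_of_pathEdges_subset (l := l) (L := L ++ [x]) (T := T') (by simpa using hr)
      (fun e he => by simpa using hc e (by simp [he]))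
    exact (List.prefix_cons_inj x).2 ih

lemma infix_of_pathEdges_subset {x : α} {l r : List α} (hr : r.Nodup) (hx : x ∈ r)
    (hc : ∀ e ∈ pathEdges (x :: l), e ∈ pathEdges r) : x :: l <:+: r := by
  obtain ⟨L, T, rfl⟩ := List.append_of_mem hx
  obtain ⟨U, hU⟩ := prefix_of_pathEdges_subset hr hc
  exact ⟨L, U, by rw [List.append_assoc, hU]⟩

lemma isChain_pathEdges {r : α → α → Prop} {Q : α → Prop} :
    ∀ {c : List α}, c.IsChain r → (∀ v ∈ c.tail.dropLast, Q v) →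
      (pathEdges c).IsChain fun e e' => r e.1 e.2 ∧ Q e.2 ∧ e.2 = e'.1 ∧ r e'.1 e'.2
  | [], _, _ | [_], _, _ | [_, _], _, _ => by simp
  | x :: y :: z :: l, hc, hQ => by
    obtain ⟨hxy, hc⟩ := List.isChain_cons_cons.1 hc
    rw [pathEdges_cons_cons, pathEdges_cons_cons, List.isChain_cons_cons, ← pathEdges_cons_cons]
    exact ⟨⟨hxy, hQ y (by simp), rfl, (List.isChain_cons_cons.1 hc).1⟩,
      isChain_pathEdges hc fun v hv => hQ v (by simp_all)⟩

lemma exists_head_arc {c : List α} (hc : 2 ≤ c.length) :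
    ∃ u w, c.head? = some u ∧ (u, w) ∈ pathEdges c := by
  obtain _ | ⟨u, _ | ⟨w, l⟩⟩ := c
  · simp at hc
  · simp at hc
  · exact ⟨u, w, rfl, by simp⟩

lemma exists_last_arc {c : List α} (hc : 2 ≤ c.length) :
    ∃ w z, c.getLast? = some z ∧ (w, z) ∈ pathEdges c := by
  rcases List.eq_nil_or_concat c with rfl | ⟨c, z, rfl⟩
  · simp at hc
  rcases List.eq_nil_or_concat c with rfl | ⟨c, w, rfl⟩
  · simp at hc
  exact ⟨w, z, by simp, mem_pathEdges_iff.2 ⟨c, [], by simp⟩⟩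

end PathEdges

lemma Acyclic.nodup_of_isChain {α : Type*} {A : Finset (α × α)} (hA : Acyclic A) {l : List α}
    (hl : l.IsChain fun u v => (u, v) ∈ A) : l.Nodup := by
  have : l.Pairwise (Relation.TransGen fun u v => (u, v) ∈ A) :=
    List.isChain_iff_pairwise.1 (hl.imp fun _ _ => Relation.TransGen.single)
  refine this.imp ?_
  rintro a _ h rfl
  exact hA a h

namespace IsPath

variable {α : Type*} {A : Finset (α × α)} {s t u v w : α} {p L T L' T' : List α}
  {e : α × α}

lemma source_mem (hp : IsPath A s t p) : s ∈ p := List.mem_of_mem_head? hp.2.1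

lemma target_mem (hp : IsPath A s t p) : t ∈ p := List.mem_of_mem_getLast? hp.2.2.1

lemma mem_of_mem_pathEdges (hp : IsPath A s t p) (he : e ∈ pathEdges p) : e ∈ A :=
  hp.1.rel_of_mem_pathEdges he

lemma exists_disjoint_of_mem_pathEdges (hp : IsPath A s t p) (he : e ∈ pathEdges p) :
    ∃ P Q : List α, P.Disjoint Q ∧ s ∈ P ∧ e.1 ∈ P ∧ e.2 ∈ Q ∧ t ∈ Q := by
  obtain ⟨L, R, rfl⟩ := mem_pathEdges_iff.1 he
  have hp' : IsPath A s t ((L ++ [e.1]) ++ e.2 :: R) := by simpa using hp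
  refine ⟨L ++ [e.1], e.2 :: R, List.disjoint_of_nodup_append hp'.2.2.2,
    List.mem_of_mem_head? ?_, by simp, by simp, List.mem_of_mem_getLast? ?_⟩
  · simpa [List.head?_append] using hp.2.1
  · simpa [List.getLast?_append_cons] using hp.2.2.1

lemma snd_ne_source (hp : IsPath A s t p) (he : e ∈ pathEdges p) : e.2 ≠ s := by
  obtain ⟨P, Q, hPQ, hs, -, he₂, -⟩ := hp.exists_disjoint_of_mem_pathEdges he
  exact fun h => hPQ hs (h ▸ he₂)

lemma fst_ne_target (hp : IsPath A s t p) (he : e ∈ pathEdges p) : e.1 ≠ t := by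
  obtain ⟨P, Q, hPQ, -, he₁, -, ht⟩ := hp.exists_disjoint_of_mem_pathEdges he
  exact fun h => hPQ he₁ (h ▸ ht)

lemma source_ne_target (hp : IsPath A s t p) (he : e ∈ pathEdges p) : s ≠ t := by
  obtain ⟨P, Q, hPQ, hs, -, -, ht⟩ := hp.exists_disjoint_of_mem_pathEdges he
  exact fun h => hPQ hs (h ▸ ht)

lemma exists_mem_pathEdges_fst (hp : IsPath A s t p) (hv : v ∈ p) (hvt : v ≠ t) :
    ∃ w, (v, w) ∈ pathEdges p := by
  obtain ⟨L, _ | ⟨w, T⟩, rfl⟩ := List.append_of_mem hv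
  · exact absurd (by simpa using hp.2.2.1) hvt
  · exact ⟨w, mem_pathEdges_iff.2 ⟨L, T, rfl⟩⟩

lemma exists_mem_pathEdges_snd (hp : IsPath A s t p) (hv : v ∈ p) (hvs : v ≠ s) :
    ∃ u, (u, v) ∈ pathEdges p := by
  obtain ⟨L, T, rfl⟩ := List.append_of_mem hv
  rcases List.eq_nil_or_concat L with rfl | ⟨L, u, rfl⟩
  · exact absurd (by simpa using hp.2.1) hvs
  · exact ⟨u, mem_pathEdges_iff.2 ⟨L, T, by simp⟩⟩

lemma singleton (v : α) : IsPath A v v [v] := ⟨List.isChain_singleton v, rfl, rfl, by simp⟩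

lemma cons (hA : Acyclic A) (hvw : (v, w) ∈ A) (hp : IsPath A w t p) :
    IsPath A v t (v :: p) := by
  have hc : (v :: p).IsChain fun u v => (u, v) ∈ A :=
    List.isChain_cons.2 ⟨fun y hy => by rw [hp.2.1] at hy; cases hy; exact hvw, hp.1⟩
  exact ⟨hc, rfl, by simp [List.getLast?_cons, hp.2.2.1], hA.nodup_of_isChain hc⟩

lemma glue (hA : Acyclic A) (h : IsPath A s t (L ++ v :: T)) (h' : IsPath A s t (L' ++ v :: T')) :
    IsPath A s t (L ++ v :: T') := by
  have hc : (L ++ v :: T').IsChain fun u v => (u, v) ∈ A :=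
    List.isChain_split.2 ⟨(List.isChain_split.1 h.1).1, (List.isChain_split.1 h'.1).2⟩
  refine ⟨hc, ?_, ?_, hA.nodup_of_isChain hc⟩
  · simpa [List.head?_append] using h.2.1
  · simpa [List.getLast?_append] using h'.2.2.1

lemma eq_of_pathEdges_subset {q : List α} (hp : IsPath A s t p) (hq : IsPath A s t q)
    (h : ∀ e ∈ pathEdges p, e ∈ pathEdges q) : p = q := by
  obtain ⟨l, rfl⟩ := List.head?_eq_some_iff.1 hp.2.1
  obtain ⟨T, rfl⟩ := List.head?_eq_some_iff.1 hq.2.1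
  obtain ⟨U, hU⟩ := prefix_of_pathEdges_subset (L := []) hq.2.2.2 h
  rcases List.eq_nil_or_concat U with rfl | ⟨U, u, rfl⟩
  · simpa using hU
  have hq' := hq
  rw [← hU] at hq'
  have hut : u = t := by simpa [List.getLast?_cons, List.getLast?_append] using hq'.2.2.1
  exact (List.disjoint_of_nodup_append hq'.2.2.2 hp.target_mem (by simp [hut])).elim

end IsPath

section PathWeight

variable {α : Type*}

def pathWeight (w : α × α → ℝ) (p : List α) : ℝ := ((pathEdges p).map w).sum

lemma pathWeight_append_cons (w : α × α → ℝ) (L T : List α) (v : α) :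
    pathWeight w (L ++ v :: T) = pathWeight w (L ++ [v]) + pathWeight w (v :: T) := by
  rw [pathWeight, pathEdges_append_cons L T v, List.map_append, List.sum_append]
  rfl

/-- Gluing the part of `r` up to `u` to the tail of `ρ`, and the head of `σ` to the part of `r`
after `z`, gives paths of weight `M`; this fixes the weights of both outer parts of `r`. -/
lemma pathWeight_eq_of_bypasses {A : Finset (α × α)} {s t u z z' y : α}
    (hA : Acyclic A) {w : α × α → ℝ} {M : ℝ} {c Lρ Rρ Lσ Rσ : List α}
    (hcu : c.head? = some u) (hcz : c.getLast? = some z)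
    (hρ : IsPath A s t (Lρ ++ u :: z' :: Rρ)) (hσ : IsPath A s t (Lσ ++ y :: z :: Rσ))
    (hM : ∀ p, IsPath A s t p → (u, z') ∈ pathEdges p ∨ (y, z) ∈ pathEdges p →
      pathWeight w p = M)
    {L R : List α} (hr : IsPath A s t (L ++ c ++ R)) :
    pathWeight w (L ++ c ++ R) =
      2 * M - pathWeight w (u :: z' :: Rρ) - pathWeight w (Lσ ++ [y, z]) + pathWeight w c := by
  obtain ⟨c₁, rfl⟩ := List.head?_eq_some_iff.1 hcu
  obtain ⟨c₂, hc₂⟩ := List.getLast?_eq_some_iff.1 hcz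
  have hr₁ : IsPath A s t (L ++ u :: (c₁ ++ R)) := by simpa using hr
  have hr₂ : IsPath A s t ((L ++ c₂) ++ z :: R) := by simpa [hc₂] using hr
  have h₁ : pathWeight w (L ++ [u]) + pathWeight w (u :: z' :: Rρ) = M := by
    rw [← pathWeight_append_cons]
    exact hM _ (hr₁.glue hA hρ) (Or.inl (mem_pathEdges_iff.2 ⟨L, Rρ, rfl⟩))
  have h₂ : pathWeight w (Lσ ++ [y, z]) + pathWeight w (z :: R) = M := by
    have hσ' : IsPath A s t ((Lσ ++ [y]) ++ z :: Rσ) := by simpa using hσ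
    have := hM _ (hσ'.glue hA hr₂) (Or.inr (mem_pathEdges_iff.2 ⟨Lσ, R, by simp⟩))
    rwa [pathWeight_append_cons, List.append_assoc, List.singleton_append] at this
  have h₃ : pathWeight w (L ++ u :: c₁ ++ R) =
      pathWeight w (L ++ [u]) + pathWeight w (u :: c₁) + pathWeight w (z :: R) := by
    calc pathWeight w (L ++ u :: c₁ ++ R)
        = pathWeight w (L ++ [u]) + pathWeight w (c₂ ++ z :: R) := by
          rw [List.append_assoc, List.cons_append, pathWeight_append_cons, ← List.cons_append,
            hc₂, List.append_assoc, List.singleton_append]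
      _ = _ := by rw [pathWeight_append_cons w c₂ R z, ← hc₂, add_assoc]
  linarith

end PathWeight

section Flows

variable {α : Type*} [DecidableEq α] {A : Finset (α × α)} {s t v : α} {p : List α}
  {e : α × α}

lemma chi_of_mem (he : e ∈ pathEdges p) : chi p e = 1 := if_pos he

lemma chi_of_notMem (he : e ∉ pathEdges p) : chi p e = 0 := if_neg he

lemma chi_nonneg (p : List α) (e : α × α) : 0 ≤ chi p e := by
  unfold chi; split_ifs <;> norm_num

lemma sum_chi_eq_ite (S : Finset (α × α))
    (hS : ∀ e ∈ S, ∀ e' ∈ S, e ∈ pathEdges p → e' ∈ pathEdges p → e = e') :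
    ∑ e ∈ S, chi p e = if ∃ e ∈ S, e ∈ pathEdges p then 1 else 0 := by
  split_ifs with h
  · obtain ⟨e₀, he₀S, he₀⟩ := h
    rw [Finset.sum_eq_single_of_mem e₀ he₀S fun e heS hne => chi_of_notMem fun he =>
      hne (hS e heS e₀ he₀S he he₀), chi_of_mem he₀]
  · exact Finset.sum_eq_zero fun e heS => chi_of_notMem fun he => h ⟨e, heS, he⟩

lemma IsPath.outSum_chi (hp : IsPath A s t p) (v : α) :
    outSum A (chi p) v = if v ∈ p ∧ v ≠ t then 1 else 0 := by
  rw [outSum, sum_chi_eq_ite]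
  · refine if_congr ⟨?_, ?_⟩ rfl rfl
    · rintro ⟨e, he, hep⟩
      obtain ⟨-, rfl⟩ := Finset.mem_filter.1 he
      exact ⟨fst_mem_of_mem_pathEdges hep, hp.fst_ne_target hep⟩
    · rintro ⟨hv, hvt⟩
      obtain ⟨w, hw⟩ := hp.exists_mem_pathEdges_fst hv hvt
      exact ⟨(v, w), Finset.mem_filter.2 ⟨hp.mem_of_mem_pathEdges hw, rfl⟩, hw⟩
  · rintro ⟨v, w⟩ he ⟨v', w'⟩ he' hw hw'
    obtain ⟨-, rfl : v = _⟩ := Finset.mem_filter.1 he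
    obtain ⟨-, rfl : v' = _⟩ := Finset.mem_filter.1 he'
    rw [hp.2.2.2.snd_eq_of_mem_pathEdges hw hw']

lemma IsPath.inSum_chi (hp : IsPath A s t p) (v : α) :
    inSum A (chi p) v = if v ∈ p ∧ v ≠ s then 1 else 0 := by
  rw [inSum, sum_chi_eq_ite]
  · refine if_congr ⟨?_, ?_⟩ rfl rfl
    · rintro ⟨e, he, hep⟩
      obtain ⟨-, rfl⟩ := Finset.mem_filter.1 he
      exact ⟨snd_mem_of_mem_pathEdges hep, hp.snd_ne_source hep⟩
    · rintro ⟨hv, hvs⟩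
      obtain ⟨u, hu⟩ := hp.exists_mem_pathEdges_snd hv hvs
      exact ⟨(u, v), Finset.mem_filter.2 ⟨hp.mem_of_mem_pathEdges hu, rfl⟩, hu⟩
  · rintro ⟨u, v⟩ he ⟨u', v'⟩ he' hu hu'
    obtain ⟨-, rfl : v = _⟩ := Finset.mem_filter.1 he
    obtain ⟨-, rfl : v' = _⟩ := Finset.mem_filter.1 he'
    rw [hp.2.2.2.fst_eq_of_mem_pathEdges hu hu']

lemma IsPath.isFlow_chi (hp : IsPath A s t p) (hst : s ≠ t) : IsFlow A s t (chi p) := by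
  refine ⟨fun e he => chi_of_notMem fun h => he (hp.mem_of_mem_pathEdges h), chi_nonneg p,
    fun v hvs hvt => ?_, ?_⟩
  · simp [hp.outSum_chi, hp.inSum_chi, hvs, hvt]
  · simp [hp.outSum_chi, hp.inSum_chi, hp.source_mem, hst]

lemma map_chi {F : Type*} [FunLike F (α × α → ℝ) ℝ]
    [AddMonoidHomClass F (α × α → ℝ) ℝ] (l : F) (hp : p.Nodup) :
    l (chi p) = pathWeight (fun e => l (Pi.single e 1)) p := by
  have : chi p = ∑ e ∈ (pathEdges p).toFinset, Pi.single e 1 := by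
    ext e'
    simp [chi, Finset.sum_apply, Pi.single_apply]
  rw [this, map_sum, pathWeight, List.sum_toFinset _ (nodup_pathEdges hp)]

end Flows

lemma Acyclic.wellFounded {α : Type*} [Finite α] {A : Finset (α × α)} (hA : Acyclic A) :
    WellFounded fun w v : α => (v, w) ∈ A := by
  have : Std.Irrefl (Relation.TransGen fun w v : α => (v, w) ∈ A) :=
    ⟨fun v hv => hA v (Relation.transGen_swap.1 hv)⟩
  exact Subrelation.wf (fun h => Relation.TransGen.single h)
    (Finite.wellFounded_of_trans_of_irrefl (Relation.TransGen fun w v : α => (v, w) ∈ A))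

section FlowDecomposition

variable {α : Type*} [DecidableEq α] {A : Finset (α × α)} {s t : α} {x y : α × α → ℝ}
  {p : List α}

@[simp] lemma outSum_sub : outSum A (x - y) = outSum A x - outSum A y := by
  ext; simp [outSum, Finset.sum_sub_distrib]

@[simp] lemma inSum_sub : inSum A (x - y) = inSum A x - inSum A y := by
  ext; simp [inSum, Finset.sum_sub_distrib]

@[simp] lemma outSum_add : outSum A (x + y) = outSum A x + outSum A y := by
  ext; simp [outSum, Finset.sum_add_distrib]

@[simp] lemma inSum_add : inSum A (x + y) = inSum A x + inSum A y := by
  ext; simp [inSum, Finset.sum_add_distrib]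

@[simp] lemma outSum_smul (c : ℝ) : outSum A (c • x) = c • outSum A x := by
  ext; simp [outSum, Finset.mul_sum]

@[simp] lemma inSum_smul (c : ℝ) : inSum A (c • x) = c • inSum A x := by
  ext; simp [inSum, Finset.mul_sum]

lemma le_inSum (hy : ∀ e, 0 ≤ y e) {u v : α} (h : (u, v) ∈ A) : y (u, v) ≤ inSum A y v :=
  Finset.single_le_sum (fun e _ => hy e) (Finset.mem_filter.2 ⟨h, rfl⟩)

lemma exists_pos_of_outSum_pos {v : α} (h : 0 < outSum A y v) :
    ∃ w, (v, w) ∈ A ∧ 0 < y (v, w) := by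
  by_contra! hneg
  have : outSum A y v ≤ 0 := Finset.sum_nonpos fun e he => by
    obtain ⟨heA, rfl⟩ := Finset.mem_filter.1 he
    exact hneg e.2 heA
  linarith

lemma exists_isPath_of_outSum_pos [Finite α] (hA : Acyclic A) (hy : ∀ e, 0 ≤ y e)
    (hcons : ∀ v ≠ t, 0 < inSum A y v → 0 < outSum A y v) {v : α} (hv : 0 < outSum A y v) :
    ∃ p, IsPath A v t p ∧ ∀ e ∈ pathEdges p, 0 < y e := by
  induction v using hA.wellFounded.induction with
  | _ v ih =>
  obtain ⟨w, hvw, hpos⟩ := exists_pos_of_outSum_pos hv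
  obtain ⟨p, hp, hppos⟩ : ∃ p, IsPath A w t p ∧ ∀ e ∈ pathEdges p, 0 < y e := by
    by_cases hwt : w = t
    · exact ⟨[w], hwt ▸ IsPath.singleton w, by simp⟩
    · exact ih w hvw (hcons w hwt (hpos.trans_le (le_inSum hy hvw)))
  obtain ⟨p, rfl⟩ : ∃ p', p = w :: p' := List.head?_eq_some_iff.1 hp.2.1
  refine ⟨v :: w :: p, hp.cons hA hvw, ?_⟩
  simp only [pathEdges_cons_cons, List.mem_cons, forall_eq_or_imp]
  exact ⟨hpos, hppos⟩

lemma sum_outSum_sub_inSum [Fintype α] (A : Finset (α × α)) (x : α × α → ℝ) :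
    ∑ v, (outSum A x v - inSum A x v) = 0 := by
  rw [Finset.sum_sub_distrib, sub_eq_zero]
  exact (Finset.sum_fiberwise_of_maps_to (fun e _ => Finset.mem_univ e.1) x).trans
    (Finset.sum_fiberwise_of_maps_to (fun e _ => Finset.mem_univ e.2) x).symm

lemma outSum_eq_inSum_of_forall_ne [Fintype α] {v : α}
    (h : ∀ w ≠ v, outSum A x w = inSum A x w) : outSum A x v = inSum A x v := by
  have := sum_outSum_sub_inSum A x
  rw [Finset.sum_eq_single v (fun w _ hw => sub_eq_zero.2 (h w hw)) (by simp)] at this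
  linarith

lemma IsFlow.source_ne_target [Fintype α] (hx : IsFlow A s t x) : s ≠ t := by
  rintro rfl
  have := outSum_eq_inSum_of_forall_ne fun w hw => hx.2.2.1 w hw hw
  linarith [hx.2.2.2]

lemma eq_zero_of_circulation [Finite α] (hA : Acyclic A) (hy0 : ∀ e ∉ A, y e = 0)
    (hy : ∀ e, 0 ≤ y e) (hcons : ∀ v, outSum A y v = inSum A y v) : y = 0 := by
  by_contra! hne
  obtain ⟨⟨a, b⟩, hab⟩ := Function.ne_iff.1 hne
  have habA : (a, b) ∈ A := by_contra fun h => hab (hy0 _ h)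
  have hout : 0 < outSum A y b := hcons b ▸ ((hy _).lt_of_ne' hab).trans_le (le_inSum hy habA)
  -- a positive path from `b` back to `a` would close a cycle with `(a, b)`
  obtain ⟨p, hp, -⟩ :=
    exists_isPath_of_outSum_pos (t := a) hA hy (fun v _ h => hcons v ▸ h) hout
  exact (List.nodup_cons.1 (hp.cons hA habA).2.2.2).1 hp.target_mem

lemma IsFlow.eq_chi_of_chi_le [Fintype α] (hA : Acyclic A) (hx : IsFlow A s t x)
    (hp : IsPath A s t p) (hst : s ≠ t) (hle : ∀ e, chi p e ≤ x e) : x = chi p := by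
  have hc := hp.isFlow_chi hst
  have hcons : ∀ v ≠ t, outSum A (x - chi p) v = inSum A (x - chi p) v := by
    intro v hvt
    simp only [outSum_sub, inSum_sub, Pi.sub_apply]
    by_cases hvs : v = s
    · subst hvs
      linarith [hx.2.2.2, hc.2.2.2]
    · rw [hx.2.2.1 v hvs hvt, hc.2.2.1 v hvs hvt]
  refine sub_eq_zero.1 (eq_zero_of_circulation hA (fun e he => by simp [hx.1 e he, hc.1 e he])
    (fun e => sub_nonneg.2 (hle e)) fun v => ?_)
  exact if hvt : v = t then hvt ▸ outSum_eq_inSum_of_forall_ne hcons else hcons v hvt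

lemma IsFlow.smul_sub_smul_chi {ε : ℝ} (hx : IsFlow A s t x) (hc : IsFlow A s t (chi p))
    (hε : ε < 1) (hle : ∀ e, ε * chi p e ≤ x e) :
    IsFlow A s t ((1 - ε)⁻¹ • (x - ε • chi p)) := by
  have hε' : (1 - ε) ≠ 0 := by linarith
  refine ⟨fun e he => by simp [hx.1 e he, hc.1 e he], fun e => ?_, fun v hvs hvt => ?_, ?_⟩
  · simpa using mul_nonneg (inv_nonneg.2 (by linarith)) (sub_nonneg.2 (hle e))
  · simp [hx.2.2.1 v hvs hvt, hc.2.2.1 v hvs hvt]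
  · simp only [outSum_smul, inSum_smul, outSum_sub, inSum_sub, Pi.smul_apply, Pi.sub_apply,
      smul_eq_mul]
    field_simp
    linear_combination hx.2.2.2 - ε * hc.2.2.2

variable (A s t) in
def pathVectors : Set (α × α → ℝ) := chi '' {p | IsPath A s t p}

lemma IsPath.chi_mem_pathVectors (hp : IsPath A s t p) : chi p ∈ pathVectors A s t :=
  ⟨p, hp, rfl⟩

/-- Peel off the vector of a positive `s`–`t` path, scaled by its bottleneck value `ε`: the
rescaled remainder is a flow with smaller support, or, if `ε ≥ 1`, `x` is that path vector. -/
theorem mem_convexHull_of_isFlow [Fintype α] (hA : Acyclic A) (hx : IsFlow A s t x) :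
    x ∈ convexHull ℝ (pathVectors A s t) := by
  induction hn : (A.filter (x · ≠ 0)).card using Nat.strong_induction_on generalizing x with
  | _ n ih =>
  have hst := hx.source_ne_target
  have hin : 0 ≤ inSum A x s := Finset.sum_nonneg fun e _ => hx.2.1 e
  obtain ⟨p, hp, hpos⟩ := exists_isPath_of_outSum_pos hA hx.2.1
    (fun v hvt h =>
      if hvs : v = s then by linarith [hvs ▸ hx.2.2.2] else hx.2.2.1 v hvs hvt ▸ h)
    (show 0 < outSum A x s by linarith [hx.2.2.2])
  obtain ⟨w, hw⟩ := hp.exists_mem_pathEdges_fst hp.source_mem hst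
  obtain ⟨e₀, he₀, hmin⟩ :=
    (pathEdges p).toFinset.exists_min_image x ⟨_, List.mem_toFinset.2 hw⟩
  rw [List.mem_toFinset] at he₀
  have hle : ∀ e, x e₀ * chi p e ≤ x e := fun e => by
    by_cases he : e ∈ pathEdges p
    · simpa [chi_of_mem he] using hmin e (List.mem_toFinset.2 he)
    · simpa [chi_of_notMem he] using hx.2.1 e
  rcases lt_or_ge (x e₀) 1 with hε | hε
  · set y := (1 - x e₀)⁻¹ • (x - x e₀ • chi p) with hy_def
    have hy : IsFlow A s t y := hx.smul_sub_smul_chi (hp.isFlow_chi hst) hε hle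
    have hsupp : A.filter (y · ≠ 0) ⊂ A.filter (x · ≠ 0) := by
      refine (Finset.ssubset_iff_of_subset fun e he => ?_).2
        ⟨e₀, Finset.mem_filter.2 ⟨hp.mem_of_mem_pathEdges he₀, (hpos e₀ he₀).ne'⟩,
          ?_⟩
      · obtain ⟨heA, hye⟩ := Finset.mem_filter.1 he
        refine Finset.mem_filter.2 ⟨heA, fun hxe => hye ?_⟩
        have : e ∉ pathEdges p := fun he => (hpos e he).ne' hxe
        simp [hy_def, hxe, chi_of_notMem this]
      · simp [hy_def, chi_of_mem he₀]
    have hxy : x = x e₀ • chi p + (1 - x e₀) • y := by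
      rw [hy_def, smul_inv_smul₀ (by linarith)]
      abel
    rw [hxy]
    exact convex_convexHull ℝ _ (subset_convexHull ℝ _ hp.chi_mem_pathVectors)
      (ih _ (hn ▸ Finset.card_lt_card hsupp) hy rfl) (hpos e₀ he₀).le (by linarith) (by ring)
  · rw [hx.eq_chi_of_chi_le hA hp hst fun e =>
      (le_mul_of_one_le_left (chi_nonneg p e) hε).trans (hle e)]
    exact subset_convexHull ℝ _ hp.chi_mem_pathVectors

theorem flowPolytope_eq_convexHull [Fintype α] (hA : Acyclic A) (hst : s ≠ t) :
    flowPolytope A s t = convexHull ℝ (pathVectors A s t) := by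
  refine subset_antisymm (fun x hx => mem_convexHull_of_isFlow hA hx) (convexHull_min ?_ ?_)
  · rintro _ ⟨p, hp, rfl⟩
    exact hp.isFlow_chi hst
  · intro x hx y hy a b ha hb hab
    refine ⟨fun e he => by simp [hx.1 e he, hy.1 e he], fun e => ?_, fun v hvs hvt => ?_, ?_⟩
    · simpa using add_nonneg (mul_nonneg ha (hx.2.1 e)) (mul_nonneg hb (hy.2.1 e))
    · simp [hx.2.2.1 v hvs hvt, hy.2.2.1 v hvs hvt]
    · simp only [outSum_add, inSum_add, outSum_smul, inSum_smul, Pi.add_apply, Pi.smul_apply,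
        smul_eq_mul]
      linear_combination a * hx.2.2.2 + b * hy.2.2.2 + hab

end FlowDecomposition

section Reduced

variable {α : Type*} {A : Finset (α × α)} {s t : α} {p : List α} {e : α × α}

lemma mem_redArcs_iff : e ∈ redArcs A s t ↔ ∃ p, IsPath A s t p ∧ e ∈ pathEdges p := by
  rw [redArcs, Finset.mem_filter]
  exact ⟨fun h => h.2, fun ⟨p, hp, he⟩ => ⟨hp.mem_of_mem_pathEdges he, p, hp, he⟩⟩

lemma IsPath.mem_redArcs (hp : IsPath A s t p) (he : e ∈ pathEdges p) : e ∈ redArcs A s t :=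
  mem_redArcs_iff.2 ⟨p, hp, he⟩

lemma ne_of_mem_redArcs (he : e ∈ redArcs A s t) : s ≠ t := by
  obtain ⟨p, hp, hep⟩ := mem_redArcs_iff.1 he
  exact hp.source_ne_target hep

variable [DecidableEq α] {u v w w' : α}

lemma dplus_target : dplus A s t t = 0 :=
  Finset.card_eq_zero.2 <| Finset.filter_eq_empty_iff.2 fun e he het => by
    obtain ⟨p, hp, hep⟩ := mem_redArcs_iff.1 he
    exact hp.fst_ne_target hep het

lemma dminus_source : dminus A s t s = 0 :=
  Finset.card_eq_zero.2 <| Finset.filter_eq_empty_iff.2 fun e he hes => by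
    obtain ⟨p, hp, hep⟩ := mem_redArcs_iff.1 he
    exact hp.snd_ne_source hep hes

lemma one_le_dplus (he : e ∈ redArcs A s t) : 1 ≤ dplus A s t e.1 :=
  Finset.card_pos.2 ⟨e, Finset.mem_filter.2 ⟨he, rfl⟩⟩

lemma one_le_dminus (he : e ∈ redArcs A s t) : 1 ≤ dminus A s t e.2 :=
  Finset.card_pos.2 ⟨e, Finset.mem_filter.2 ⟨he, rfl⟩⟩

lemma exists_ne_of_one_lt_dplus (h : 1 < dplus A s t v) (w : α) :
    ∃ w', w' ≠ w ∧ (v, w') ∈ redArcs A s t := by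
  obtain ⟨⟨v', w'⟩, hmem, hne⟩ := Finset.exists_mem_ne h (v, w)
  obtain ⟨hred, rfl : v' = v⟩ := Finset.mem_filter.1 hmem
  exact ⟨w', fun h => hne (h ▸ rfl), hred⟩

lemma exists_ne_of_one_lt_dminus (h : 1 < dminus A s t v) (u : α) :
    ∃ u', u' ≠ u ∧ (u', v) ∈ redArcs A s t := by
  obtain ⟨⟨u', v'⟩, hmem, hne⟩ := Finset.exists_mem_ne h (u, v)
  obtain ⟨hred, rfl : v' = v⟩ := Finset.mem_filter.1 hmem
  exact ⟨u', fun h => hne (h ▸ rfl), hred⟩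

lemma IsPath.mem_pathEdges_of_dplus_eq_one (hp : IsPath A s t p) (hv : v ∈ p)
    (h : dplus A s t v = 1) (hvw : (v, w) ∈ redArcs A s t) : (v, w) ∈ pathEdges p := by
  have hvt : v ≠ t := by
    rintro rfl
    simp [dplus_target] at h
  obtain ⟨w', hw'⟩ := hp.exists_mem_pathEdges_fst hv hvt
  have := Finset.card_le_one.1 h.le _ (Finset.mem_filter.2 ⟨hvw, rfl⟩) _
    (Finset.mem_filter.2 ⟨hp.mem_redArcs hw', rfl⟩)
  rwa [this]

lemma IsPath.mem_pathEdges_of_dminus_eq_one (hp : IsPath A s t p) (hv : v ∈ p)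
    (h : dminus A s t v = 1) (huv : (u, v) ∈ redArcs A s t) : (u, v) ∈ pathEdges p := by
  have hvs : v ≠ s := by
    rintro rfl
    simp [dminus_source] at h
  obtain ⟨u', hu'⟩ := hp.exists_mem_pathEdges_snd hv hvs
  have := Finset.card_le_one.1 h.le _ (Finset.mem_filter.2 ⟨huv, rfl⟩) _
    (Finset.mem_filter.2 ⟨hp.mem_redArcs hu', rfl⟩)
  rwa [this]

end Reduced

section Corridors

variable {α : Type*} [DecidableEq α] {A : Finset (α × α)} {s t : α} {p c : List α}
  {e e' : α × α}

lemma IsCorridor.mem_pathEdges_of_mem (hc : IsCorridor A s t c) (hp : IsPath A s t p)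
    (he : e ∈ pathEdges c) (he' : e' ∈ pathEdges c) (hep : e ∈ pathEdges p) :
    e' ∈ pathEdges p := by
  have hne : pathEdges c ≠ [] := List.ne_nil_of_mem he
  have key := (isChain_pathEdges hc.2.1 hc.2.2.1).induction
    (fun f => f ∈ pathEdges p ↔ (pathEdges c).head hne ∈ pathEdges p) _ ?_ (fun _ => Iff.rfl)
  · exact (key e' he').2 ((key e he).1 hep)
  rintro ⟨u, v⟩ ⟨v', w⟩ ⟨huv, ⟨hdm, hdp⟩, rfl : v = v', hvw⟩ h
  refine Iff.trans ⟨fun h' => ?_, fun h' => ?_⟩ h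
  · exact hp.mem_pathEdges_of_dminus_eq_one (fst_mem_of_mem_pathEdges h') hdm huv
  · exact hp.mem_pathEdges_of_dplus_eq_one (snd_mem_of_mem_pathEdges h') hdp hvw

lemma IsCorridor.infix (hc : IsCorridor A s t c) (hp : IsPath A s t p) (he : e ∈ pathEdges c)
    (hep : e ∈ pathEdges p) : c <:+: p := by
  obtain _ | ⟨u, _ | ⟨v, l⟩⟩ := c
  · simp at he
  · simp at he
  refine infix_of_pathEdges_subset hp.2.2.2 ?_ fun e' he' => hc.mem_pathEdges_of_mem hp he he' hep
  exact fst_mem_of_mem_pathEdges (hc.mem_pathEdges_of_mem hp he (e' := (u, v)) (by simp) hep)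

/-- A longest chain of reduced arcs through `e` whose internal nodes have in- and out-degree 1
cannot be extended at either end, so its end nodes are not of that kind. -/
theorem exists_isCorridor [Fintype α] (hA : Acyclic A) (he : e ∈ redArcs A s t) :
    ∃ c, IsCorridor A s t c ∧ e ∈ pathEdges c := by
  set T : Set (List α) := {c | c.IsChain (fun u v => (u, v) ∈ redArcs A s t) ∧
    e ∈ pathEdges c ∧ ∀ v ∈ c.tail.dropLast, dminus A s t v = 1 ∧ dplus A s t v = 1}
  have hfin : T.Finite := (Set.finite_range (Subtype.val : {l : List α // l.Nodup} → _)).subset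
    fun c hc =>
      ⟨⟨c, hA.nodup_of_isChain (hc.1.imp fun _ _ h => Finset.mem_of_mem_filter _ h)⟩, rfl⟩
  obtain ⟨c, ⟨hchain, hec, hin⟩, hmax⟩ :=
    Set.exists_max_image T List.length hfin ⟨[e.1, e.2], by simpa [T] using he⟩
  obtain ⟨L, R, hcLR⟩ := mem_pathEdges_iff.1 hec
  have hlen : 2 ≤ c.length := by simp [hcLR]; omega
  refine ⟨c, ⟨hlen, hchain, hin, fun h hh => ?_, fun z hz => ?_⟩, hec⟩
  · by_contra! hinner
    obtain ⟨⟨g, h₀⟩, hg⟩ := Finset.card_eq_one.1 hinner.1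
    obtain ⟨hgred, hh₀ : h₀ = h⟩ := Finset.mem_filter.1 (hg ▸ Finset.mem_singleton_self _)
    rw [hh₀] at hgred
    obtain ⟨c, rfl⟩ := List.head?_eq_some_iff.1 hh
    have hc : c ≠ [] := by rintro rfl; simp at hlen
    suffices g :: h :: c ∈ T by simpa using hmax _ this
    refine ⟨List.isChain_cons_cons.2 ⟨hgred, hchain⟩, by simp [hec], fun v hv => ?_⟩
    rw [List.tail_cons, List.dropLast_cons_of_ne_nil hc, List.mem_cons] at hv
    exact hv.elim (· ▸ hinner) (hin v)
  · by_contra! hinner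
    obtain ⟨⟨z₀, z'⟩, hz'⟩ := Finset.card_eq_one.1 hinner.2
    obtain ⟨hz'red, hz₀ : z₀ = z⟩ :=
      Finset.mem_filter.1 (hz' ▸ Finset.mem_singleton_self _)
    rw [hz₀] at hz'red
    obtain ⟨c, rfl⟩ := List.getLast?_eq_some_iff.1 hz
    have hc : c ≠ [] := by rintro rfl; simp at hlen
    suffices c ++ [z, z'] ∈ T by simpa using hmax _ this
    refine ⟨List.isChain_split.2 ⟨hchain, List.isChain_pair.2 hz'red⟩,
      by rw [pathEdges_append_cons]; exact List.mem_append_left _ hec, fun v hv => ?_⟩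
    simp only [List.tail_append_of_ne_nil hc, List.dropLast_append_cons, List.dropLast_cons_cons,
      List.dropLast_singleton, List.mem_append, List.mem_singleton] at hv hin
    exact hv.elim (fun hv => hin v (by simpa using hv)) (· ▸ hinner)

lemma IsGoodArc.pathWeight_eq (hga : IsGoodArc A s t a) (hA : Acyclic A)
    {w : α × α → ℝ} {M : ℝ}
    (hM : ∀ p, IsPath A s t p → a ∉ pathEdges p → pathWeight w p = M)
    {p r : List α} (hp : IsPath A s t p) (hap : a ∈ pathEdges p) (hr : IsPath A s t r)
    (har : a ∈ pathEdges r) : pathWeight w p = pathWeight w r := by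
  obtain ⟨c, ⟨hc, hhead, hlast⟩, hac⟩ := hga
  obtain ⟨u, u₂, hu, hu₂⟩ := exists_head_arc hc.1
  obtain ⟨w₀, z, hz, hw₀⟩ := exists_last_arc hc.1
  obtain ⟨z', hz', hz'red⟩ := exists_ne_of_one_lt_dplus (hhead u hu) u₂
  obtain ⟨y, hy, hyred⟩ := exists_ne_of_one_lt_dminus (hlast z hz) w₀
  obtain ⟨ρ, hρ, hρz'⟩ := mem_redArcs_iff.1 hz'red
  obtain ⟨Lρ, Rρ, rfl⟩ := mem_pathEdges_iff.1 hρz'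
  obtain ⟨σ, hσ, hσy⟩ := mem_redArcs_iff.1 hyred
  obtain ⟨Lσ, Rσ, rfl⟩ := mem_pathEdges_iff.1 hσy
  have hM' : ∀ q, IsPath A s t q → (u, z') ∈ pathEdges q ∨ (y, z) ∈ pathEdges q →
      pathWeight w q = M := by
    rintro q hq (h | h) <;> refine hM q hq fun haq => ?_
    · exact hz' (hq.2.2.2.snd_eq_of_mem_pathEdges h (hc.mem_pathEdges_of_mem hq hac hu₂ haq))
    · exact hy (hq.2.2.2.fst_eq_of_mem_pathEdges h (hc.mem_pathEdges_of_mem hq hac hw₀ haq))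
  obtain ⟨L, R, rfl⟩ := hc.infix hp hac hap
  obtain ⟨L', R', rfl⟩ := hc.infix hr hac har
  rw [pathWeight_eq_of_bypasses hA hu hz hρ hσ hM' hp,
    pathWeight_eq_of_bypasses hA hu hz hρ hσ hM' hr]

end Corridors

section Faces

variable {α : Type*} [DecidableEq α] {A : Finset (α × α)} {s t : α} {a b : α × α}
  {G : Set (α × α → ℝ)}

abbrev zeroFace (A : Finset (α × α)) (s t : α) (b : α × α) : Set (α × α → ℝ) :=
  {x ∈ flowPolytope A s t | x b = 0}

lemma isExposed_zeroFace (A : Finset (α × α)) (s t : α) (b : α × α) :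
    IsExposed ℝ (flowPolytope A s t) (zeroFace A s t b) := by
  rintro ⟨x₀, hx₀, hx₀b⟩
  refine ⟨-ContinuousLinearMap.proj b, Set.ext fun x =>
    ⟨fun ⟨hx, hxb⟩ => ⟨hx, fun y hy => ?_⟩,
      fun ⟨hx, hmax⟩ => ⟨hx, le_antisymm ?_ (hx.2.1 b)⟩⟩⟩
  · simpa [hxb] using hy.2.1 b
  · simpa [hx₀b] using hmax x₀ hx₀

lemma zeroFace_ne_flowPolytope (hb : b ∈ redArcs A s t) :
    zeroFace A s t b ≠ flowPolytope A s t := by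
  obtain ⟨p, hp, hbp⟩ := mem_redArcs_iff.1 hb
  intro h
  have : chi p ∈ zeroFace A s t b := by
    rw [h]
    exact hp.isFlow_chi (ne_of_mem_redArcs hb)
  exact one_ne_zero ((chi_of_mem hbp).symm.trans this.2)

variable [Fintype α]

lemma IsExposed.subset_zeroFace (hG : IsExposed ℝ (flowPolytope A s t) G) (hA : Acyclic A)
    (hb : ∀ p, IsPath A s t p → chi p ∈ G → b ∉ pathEdges p) :
    G ⊆ zeroFace A s t b := by
  intro x hx
  have hxS := hG.subset hx
  rw [flowPolytope_eq_convexHull hA (IsFlow.source_ne_target hxS)] at hG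
  refine ⟨hxS, convexHull_min ?_ (convex_hyperplane (LinearMap.proj b).isLinear 0)
    (hG.isExtreme.subset_convexHull_inter hx)⟩
  rintro _ ⟨⟨p, hp, rfl⟩, hpG⟩
  exact chi_of_notMem (hb p hp hpG)

lemma IsExposed.eq_flowPolytope (hA : Acyclic A) (hst : s ≠ t)
    (hG : IsExposed ℝ (flowPolytope A s t) G) (h : ∀ p, IsPath A s t p → chi p ∈ G) :
    G = flowPolytope A s t := by
  rw [flowPolytope_eq_convexHull hA hst] at hG ⊢
  refine hG.subset.antisymm (convexHull_min ?_ (hG.convex (convex_convexHull ℝ _)))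
  rintro _ ⟨p, hp, rfl⟩
  exact h p hp

end Faces

section Facets

variable {α : Type*} [Fintype α] [DecidableEq α] {A : Finset (α × α)} {s t v : α}
  {a b : α × α} {p : List α}

lemma IsFacetOf.mem_pathEdges_of_imp
    (hfac : IsFacetOf (flowPolytope A s t) (zeroFace A s t a))
    (hA : Acyclic A) (hb : b ∈ redArcs A s t)
    (himp : ∀ q, IsPath A s t q → b ∈ pathEdges q → a ∈ pathEdges q)
    (hp : IsPath A s t p) (hap : a ∈ pathEdges p) : b ∈ pathEdges p := by
  have hFG : zeroFace A s t a ⊆ zeroFace A s t b :=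
    hfac.1.subset_zeroFace hA fun q hq hqF hbq =>
      one_ne_zero ((chi_of_mem (himp q hq hbq)).symm.trans hqF.2)
  have hGF := hfac.2.2 _ (isExposed_zeroFace A s t b) (zeroFace_ne_flowPolytope hb) hFG
  by_contra hbp
  have : chi p ∈ zeroFace A s t b :=
    ⟨hp.isFlow_chi (ne_of_mem_redArcs hb), chi_of_notMem hbp⟩
  exact one_ne_zero ((chi_of_mem hap).symm.trans (hGF ▸ this).2)

lemma IsFacetOf.existsUnique
    (hfac : IsFacetOf (flowPolytope A s t) (zeroFace A s t a))
    (hA : Acyclic A) (ha : a ∈ redArcs A s t)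
    (hall : ∀ p, IsPath A s t p → a ∈ pathEdges p) :
    ∃! p, IsPath A s t p := by
  obtain ⟨p₀, hp₀, -⟩ := mem_redArcs_iff.1 ha
  refine ⟨p₀, hp₀, fun p hp => by_contra fun hne => ?_⟩
  obtain ⟨b, hbp, hbp₀⟩ : ∃ b ∈ pathEdges p, b ∉ pathEdges p₀ := by
    by_contra! h
    exact hne (hp.eq_of_pathEdges_subset hp₀ h)
  exact hbp₀ (hfac.mem_pathEdges_of_imp hA (hp.mem_redArcs hbp) (fun q hq _ => hall q hq) hp₀
    (hall p₀ hp₀))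

lemma IsFacetOf.ne_source
    (hfac : IsFacetOf (flowPolytope A s t) (zeroFace A s t a))
    (hA : Acyclic A) (ha : a ∈ redArcs A s t) (hnu : ¬∃! p, IsPath A s t p)
    (hv : ∀ p, IsPath A s t p → v ∈ p → a ∈ pathEdges p) : v ≠ s := by
  rintro rfl
  exact hnu (hfac.existsUnique hA ha fun p hp => hv p hp hp.source_mem)

lemma IsFacetOf.ne_target
    (hfac : IsFacetOf (flowPolytope A s t) (zeroFace A s t a))
    (hA : Acyclic A) (ha : a ∈ redArcs A s t) (hnu : ¬∃! p, IsPath A s t p)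
    (hv : ∀ p, IsPath A s t p → v ∈ p → a ∈ pathEdges p) : v ≠ t := by
  rintro rfl
  exact hnu (hfac.existsUnique hA ha fun p hp => hv p hp hp.target_mem)

lemma IsFacetOf.dminus_le_one
    (hfac : IsFacetOf (flowPolytope A s t) (zeroFace A s t a))
    (hA : Acyclic A) (hv : ∀ p, IsPath A s t p → v ∈ p → a ∈ pathEdges p) :
    dminus A s t v ≤ 1 := by
  by_contra! h
  obtain ⟨u, -, hu⟩ := exists_ne_of_one_lt_dminus h v
  obtain ⟨u', hne, hu'⟩ := exists_ne_of_one_lt_dminus h u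
  obtain ⟨q, hq, hu'q⟩ := mem_redArcs_iff.1 hu'
  have huq := hfac.mem_pathEdges_of_imp hA hu
    (fun p hp h => hv p hp (snd_mem_of_mem_pathEdges h)) hq
    (hv q hq (snd_mem_of_mem_pathEdges hu'q))
  exact hne (hq.2.2.2.fst_eq_of_mem_pathEdges hu'q huq)

lemma IsFacetOf.dplus_le_one
    (hfac : IsFacetOf (flowPolytope A s t) (zeroFace A s t a))
    (hA : Acyclic A) (hv : ∀ p, IsPath A s t p → v ∈ p → a ∈ pathEdges p) :
    dplus A s t v ≤ 1 := by
  by_contra! h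
  obtain ⟨w, -, hw⟩ := exists_ne_of_one_lt_dplus h v
  obtain ⟨w', hne, hw'⟩ := exists_ne_of_one_lt_dplus h w
  obtain ⟨q, hq, hw'q⟩ := mem_redArcs_iff.1 hw'
  have hwq := hfac.mem_pathEdges_of_imp hA hw
    (fun p hp h => hv p hp (fst_mem_of_mem_pathEdges h)) hq
    (hv q hq (fst_mem_of_mem_pathEdges hw'q))
  exact hne (hq.2.2.2.snd_eq_of_mem_pathEdges hw'q hwq)

end Facets

section Main

variable {α : Type*} [Fintype α] [DecidableEq α] {A : Finset (α × α)} {s t : α}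
  {a : α × α}

theorem mem_redArcs_of_isFacetOf (hA : Acyclic A)
    (hfac : IsFacetOf (flowPolytope A s t) (zeroFace A s t a)) :
    a ∈ redArcs A s t := by
  by_contra ha
  refine hfac.2.1 (subset_antisymm (fun x hx => hx.1) fun x hx => ?_)
  exact (IsExposed.refl _).subset_zeroFace hA (fun p hp _ hap => ha (hp.mem_redArcs hap)) hx

theorem isGoodArc_of_isFacetOf (hA : Acyclic A)
    (hfac : IsFacetOf (flowPolytope A s t) (zeroFace A s t a))
    (ha : a ∈ redArcs A s t) (hnu : ¬∃! p, IsPath A s t p) : IsGoodArc A s t a := by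
  obtain ⟨c, hc, hac⟩ := exists_isCorridor hA ha
  obtain ⟨u, u₂, hu, hu₂⟩ := exists_head_arc hc.1
  obtain ⟨w₀, z, hz, hw₀⟩ := exists_last_arc hc.1
  have huu₂ := hc.2.1.rel_of_mem_pathEdges hu₂
  have hw₀z := hc.2.1.rel_of_mem_pathEdges hw₀
  refine ⟨c, ⟨hc, fun h hh => ?_, fun z' hz' => ?_⟩, hac⟩
  · obtain rfl : u = h := Option.some.inj (hu.symm.trans hh)
    by_contra! hlt
    have h1 : dplus A s t u = 1 := le_antisymm (by omega) (one_le_dplus huu₂)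
    have hv : ∀ p, IsPath A s t p → u ∈ p → a ∈ pathEdges p := fun p hp hup =>
      hc.mem_pathEdges_of_mem hp hu₂ hac (hp.mem_pathEdges_of_dplus_eq_one hup h1 huu₂)
    obtain ⟨p, hp, hup⟩ := mem_redArcs_iff.1 huu₂
    obtain ⟨g, hg⟩ := hp.exists_mem_pathEdges_snd (fst_mem_of_mem_pathEdges hup)
      (hfac.ne_source hA ha hnu hv)
    have h1' := le_antisymm (hfac.dminus_le_one hA hv) (one_le_dminus (hp.mem_redArcs hg))
    exact (hc.2.2.2.1 u hu).elim (· h1') (· h1)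
  · obtain rfl : z = z' := Option.some.inj (hz.symm.trans hz')
    by_contra! hlt
    have h1 : dminus A s t z = 1 := le_antisymm (by omega) (one_le_dminus hw₀z)
    have hv : ∀ p, IsPath A s t p → z ∈ p → a ∈ pathEdges p := fun p hp hzp =>
      hc.mem_pathEdges_of_mem hp hw₀ hac (hp.mem_pathEdges_of_dminus_eq_one hzp h1 hw₀z)
    obtain ⟨p, hp, hzp⟩ := mem_redArcs_iff.1 hw₀z
    obtain ⟨g, hg⟩ := hp.exists_mem_pathEdges_fst (snd_mem_of_mem_pathEdges hzp)
      (hfac.ne_target hA ha hnu hv)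
    have h1' := le_antisymm (hfac.dplus_le_one hA hv) (one_le_dplus (hp.mem_redArcs hg))
    exact (hc.2.2.2.2 z hz).elim (· h1) (· h1')

theorem isFacetOf_of_isGoodArc (hA : Acyclic A) (hga : IsGoodArc A s t a) :
    IsFacetOf (flowPolytope A s t) (zeroFace A s t a) := by
  have ha : a ∈ redArcs A s t := by
    obtain ⟨c, hc, hac⟩ := hga
    exact hc.1.2.1.rel_of_mem_pathEdges hac
  have hst := ne_of_mem_redArcs ha
  refine ⟨isExposed_zeroFace A s t a, zeroFace_ne_flowPolytope ha, fun G hG hGS hFG => ?_⟩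
  rcases G.eq_empty_or_nonempty with rfl | ⟨g, hgG⟩
  · exact (Set.subset_empty_iff.1 hFG).symm
  obtain ⟨l, hl⟩ := hG ⟨g, hgG⟩
  have hchi : ∀ p, IsPath A s t p → l (chi p) = pathWeight (fun e => l (Pi.single e 1)) p :=
    fun p hp => map_chi l hp.2.2.2
  have hmemG : ∀ p, IsPath A s t p → (chi p ∈ G ↔ l (chi p) = l g) := fun p hp => by
    rw [hl] at hgG ⊢
    exact ⟨fun h => le_antisymm (hgG.2 _ h.1) (h.2 g hgG.1),
      fun h => ⟨hp.isFlow_chi hst, fun y hy => h ▸ hgG.2 y hy⟩⟩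
  refine (hG.subset_zeroFace hA fun p hp hpG hap => hGS ?_).antisymm hFG
  refine hG.eq_flowPolytope hA hst fun r hr => ?_
  by_cases har : a ∈ pathEdges r
  · rw [hmemG r hr, hchi r hr,
      ← hga.pathWeight_eq hA (M := l g) (fun q hq haq => ?_) hp hap hr har, ← hchi p hp,
      ← hmemG p hp]
    · exact hpG
    · rw [← hchi q hq, ← hmemG q hq]
      exact hFG ⟨hq.isFlow_chi hst, chi_of_notMem haq⟩
  · exact hFG ⟨hr.isFlow_chi hst, chi_of_notMem har⟩

theorem isFacetOf_of_existsUnique (hA : Acyclic A) (ha : a ∈ redArcs A s t)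
    (hu : ∃! p, IsPath A s t p) :
    IsFacetOf (flowPolytope A s t) (zeroFace A s t a) := by
  obtain ⟨p, hp, hap⟩ := mem_redArcs_iff.1 ha
  have hS : flowPolytope A s t = {chi p} := by
    rw [flowPolytope_eq_convexHull hA (ne_of_mem_redArcs ha),
      ← convexHull_singleton (𝕜 := ℝ)]
    congr 1
    ext x
    exact ⟨fun ⟨q, hq, hx⟩ => hx ▸ hu.unique hq hp ▸ rfl,
      fun hx => ⟨p, hp, hx.symm⟩⟩
  have hF : zeroFace A s t a = ∅ := Set.eq_empty_of_forall_notMem fun x ⟨hx, hxa⟩ => by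
    rw [hS, Set.mem_singleton_iff] at hx
    simp [hx, chi_of_mem hap] at hxa
  rw [hF, hS]
  refine ⟨isExposed_empty, (Set.singleton_ne_empty _).symm, fun G hG hGS _ => ?_⟩
  exact (Set.subset_singleton_iff_eq.1 hG.subset).resolve_right hGS

end Main

/-- `x(a) ≥ 0` defines a facet of the flow polytope iff `a` lies on some `s`–`t` path and
moreover either the network has exactly one `s`–`t` path, or the arc `a` is good. -/
theorem stmt14 (A : Finset (V × V)) (s t : V) (hA : Acyclic A) (a : V × V) :
    IsFacetOf (flowPolytope A s t) {x ∈ flowPolytope A s t | x a = 0} ↔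
      (a ∈ redArcs A s t ∧
        ((∃! p : List V, IsPath A s t p) ∨ IsGoodArc A s t a)) := by
  refine ⟨fun hfac => ?_, fun ⟨ha, h⟩ => h.elim (isFacetOf_of_existsUnique hA ha)
    (isFacetOf_of_isGoodArc hA)⟩
  have ha := mem_redArcs_of_isFacetOf hA hfac
  exact ⟨ha, or_iff_not_imp_left.2 (isGoodArc_of_isFacetOf hA hfac ha)⟩
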